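/- arXiv:1702.04763 — 3 statements merged into one kernel-verified Lean document; each statement's English description precedes it below -/
import Mathlib

section
/- With notation as in the standard Sierpiński carpet packing, the limit lim_{n→∞} N(3ⁿ/√2)/(3ⁿ/√2)^s equals √(2^s)/7 while lim_{n→∞} N(3ⁿ)/(3ⁿ)^s = 1/7, where s = log 8/log 3; consequently the limit lim_{x→∞} N(x)/x^s does not exist. -/
open Filter

/-! The packing of the standard Sierpiński carpet: the index `none` corresponds to `C₀`,
the boundary of the unit square, of Euclidean diameter `√2`; the index `some ⟨n, j⟩`
(with `j < 8 ^ n`) corresponds to the boundary of one of the `8 ^ n` open squares of side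
length `3 ^ (-(n+1))` removed at step `n + 1`, of Euclidean diameter `√2 · 3 ^ (-(n+1))`. -/

/-- Index set of the curves of the standard Sierpiński carpet packing. -/
def carpetIndex : Type := Option (Σ n : ℕ, Fin (8 ^ n))

/-- Euclidean diameter of the curve with the given index. -/
noncomputable def carpetDiam : carpetIndex → ℝ
  | none => Real.sqrt 2
  | some ⟨n, _⟩ => Real.sqrt 2 / 3 ^ (n + 1)

/-- The curvature distribution function `N(x) = #{k : (diam C_k)⁻¹ ≤ x}`. -/
noncomputable def carpetN (x : ℝ) : ℕ := Nat.card {i : carpetIndex // (carpetDiam i)⁻¹ ≤ x}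

open Set Topology

/-! Every threshold `x ∈ [3ⁿ/√2, 3ⁿ⁺¹/√2)` counts exactly the curves of the first `n` generations
together with `C₀`, so `N(x) = (8ⁿ + 6)/7`. Both `3ⁿ/√2` and `3ⁿ` lie in that interval, but
`(3ⁿ)^s = 8ⁿ` while `(3ⁿ/√2)^s = 8ⁿ/√(2^s)`, so along the two sequences `N(x)/x^s` tends to
`1/7` and `√(2^s)/7` respectively. Since `2^s > 1` these differ, and `N(x)/x^s` has no limit. -/

def carpetIndexSubtypeEquiv (n : ℕ) (p : carpetIndex → Prop) (h_none : p none)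
    (h_some : ∀ (k : ℕ) (j : Fin (8 ^ k)), p (some ⟨k, j⟩) ↔ k < n) :
    {i : carpetIndex // p i} ≃ Option (Σ k : Fin n, Fin (8 ^ (k : ℕ))) where
  toFun
    | ⟨none, _⟩ => none
    | ⟨some ⟨k, j⟩, hp⟩ => some ⟨⟨k, (h_some k j).1 hp⟩, j⟩
  invFun
    | none => ⟨none, h_none⟩
    | some ⟨⟨k, hk⟩, j⟩ => ⟨some ⟨k, j⟩, (h_some k j).2 hk⟩
  left_inv := by rintro ⟨_ | ⟨k, j⟩, hp⟩ <;> rfl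
  right_inv := by rintro (_ | ⟨⟨k, hk⟩, j⟩) <;> rfl

lemma inv_carpetDiam_some (k : ℕ) (j : Fin (8 ^ k)) :
    (carpetDiam (some ⟨k, j⟩))⁻¹ = 3 ^ (k + 1) / √2 :=
  inv_div _ _

lemma strictMono_three_pow_div_sqrt_two : StrictMono fun m : ℕ => (3 : ℝ) ^ m / √2 :=
  fun _ _ h => div_lt_div_of_pos_right (pow_lt_pow_right₀ (by norm_num) h) (by positivity)

lemma inv_carpetDiam_some_le_iff {n : ℕ} {x : ℝ}
    (hx : x ∈ Ico ((3 : ℝ) ^ n / √2) (3 ^ (n + 1) / √2)) (k : ℕ) (j : Fin (8 ^ k)) :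
    (carpetDiam (some ⟨k, j⟩))⁻¹ ≤ x ↔ k < n := by
  rw [inv_carpetDiam_some]
  constructor
  · intro hk
    exact Nat.succ_lt_succ_iff.1
      (strictMono_three_pow_div_sqrt_two.lt_iff_lt.1 (hk.trans_lt hx.2))
  · intro hk
    exact (strictMono_three_pow_div_sqrt_two.monotone hk).trans hx.1

lemma three_pow_mem_Ico (n : ℕ) : (3 : ℝ) ^ n ∈ Ico (3 ^ n / √2) (3 ^ (n + 1) / √2) := by
  have h_one_le : 1 ≤ √2 := Real.one_le_sqrt.2 (by norm_num)
  have h_lt_three : √2 < 3 := (Real.sqrt_lt' (by norm_num)).2 (by norm_num)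
  refine ⟨div_le_self (by positivity) h_one_le, ?_⟩
  rw [lt_div_iff₀ (by positivity), pow_succ]
  gcongr

lemma carpetN_eq_of_mem_Ico {n : ℕ} {x : ℝ}
    (hx : x ∈ Ico ((3 : ℝ) ^ n / √2) (3 ^ (n + 1) / √2)) :
    (carpetN x : ℝ) = (8 ^ n + 6) / 7 := by
  have h_none : (carpetDiam none)⁻¹ ≤ x := by
    simpa [carpetDiam] using
      (strictMono_three_pow_div_sqrt_two.monotone (Nat.zero_le n)).trans hx.1
  have h_card : carpetN x = ∑ k ∈ Finset.range n, 8 ^ k + 1 := by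
    rw [carpetN,
      Nat.card_congr (carpetIndexSubtypeEquiv n _ h_none (inv_carpetDiam_some_le_iff hx)),
      Nat.card_eq_fintype_card, Fintype.card_option, Fintype.card_sigma]
    simp only [Fintype.card_fin, Fin.sum_univ_eq_sum_range (fun k => 8 ^ k)]
  rw [h_card]
  push_cast
  rw [geom_sum_eq (by norm_num)]
  ring

lemma pow_rpow_log_div_log {b x : ℝ} (hb : 0 < b) (hb1 : b ≠ 1) (hx : 0 < x) (n : ℕ) :
    (b ^ n) ^ (Real.log x / Real.log b) = x ^ n := by
  rw [← Real.rpow_pow_comm hb.le]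
  exact congrArg (· ^ n) (Real.rpow_logb hb hb1 hx)

lemma sqrt_rpow {x : ℝ} (hx : 0 ≤ x) (z : ℝ) : √x ^ z = √(x ^ z) := by
  rw [← Real.rpow_div_two_eq_sqrt z hx, Real.sqrt_eq_rpow, ← Real.rpow_mul hx, mul_one_div]

lemma tendsto_pow_add_const_div_pow {r : ℝ} (hr : 1 < r) (a : ℝ) :
    Tendsto (fun n : ℕ => (r ^ n + a) / r ^ n) atTop (𝓝 1) := by
  have h_eq : ∀ n : ℕ, (r ^ n + a) / r ^ n = 1 + a * r⁻¹ ^ n := fun n => by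
    rw [inv_pow, add_div, div_self (by positivity), div_eq_mul_inv]
  simp only [h_eq]
  have h_zero := tendsto_pow_atTop_nhds_zero_of_lt_one (by positivity) (inv_lt_one_of_one_lt₀ hr)
  simpa using (h_zero.const_mul a).const_add 1

lemma tendsto_carpetN_div_rpow {x : ℕ → ℝ} {c : ℝ}
    (hx : ∀ n, x n ∈ Ico ((3 : ℝ) ^ n / √2) (3 ^ (n + 1) / √2))
    (hxs : ∀ n, x n ^ (Real.log 8 / Real.log 3) = 8 ^ n / c) :
    Tendsto (fun n => (carpetN (x n) : ℝ) / x n ^ (Real.log 8 / Real.log 3)) atTop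
      (𝓝 (c / 7)) := by
  have h_eq : ∀ n, (carpetN (x n) : ℝ) / x n ^ (Real.log 8 / Real.log 3) =
      c / 7 * ((8 ^ n + 6) / 8 ^ n) := fun n => by
    rw [carpetN_eq_of_mem_Ico (hx n), hxs n, div_div_eq_mul_div]
    ring
  simp only [h_eq]
  simpa using (tendsto_pow_add_const_div_pow (by norm_num) 6).const_mul (c / 7)

/-- with `s = log 8 / log 3`,
`lim_{n→∞} N(3ⁿ/√2)/(3ⁿ/√2)^s = √(2^s)/7`, `lim_{n→∞} N(3ⁿ)/(3ⁿ)^s = 1/7`, and consequently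
`lim_{x→∞} N(x)/x^s` does not exist. -/
theorem carpetN_limits :
    (Tendsto
      (fun n : ℕ => (carpetN ((3 : ℝ) ^ n / Real.sqrt 2) : ℝ) /
        ((3 : ℝ) ^ n / Real.sqrt 2) ^ (Real.log 8 / Real.log 3))
      atTop (nhds (Real.sqrt (2 ^ (Real.log 8 / Real.log 3)) / 7))) ∧
    (Tendsto
      (fun n : ℕ => (carpetN ((3 : ℝ) ^ n) : ℝ) /
        ((3 : ℝ) ^ n) ^ (Real.log 8 / Real.log 3))
      atTop (nhds (1 / 7))) ∧
    ¬ ∃ L : ℝ, Tendsto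
      (fun x : ℝ => (carpetN x : ℝ) / x ^ (Real.log 8 / Real.log 3)) atTop (nhds L) := by
  have h_pow : ∀ n : ℕ, ((3 : ℝ) ^ n) ^ (Real.log 8 / Real.log 3) = 8 ^ n :=
    pow_rpow_log_div_log (by norm_num) (by norm_num) (by norm_num)
  have h_lim_div_sqrt : Tendsto (fun n : ℕ => (carpetN ((3 : ℝ) ^ n / √2) : ℝ) /
      ((3 : ℝ) ^ n / √2) ^ (Real.log 8 / Real.log 3)) atTop
      (𝓝 (√(2 ^ (Real.log 8 / Real.log 3)) / 7)) :=
    tendsto_carpetN_div_rpow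
      (fun n => ⟨le_rfl, strictMono_three_pow_div_sqrt_two n.lt_succ_self⟩)
      fun n => by rw [Real.div_rpow (by positivity) (by positivity), h_pow, sqrt_rpow zero_le_two]
  have h_lim_pow : Tendsto (fun n : ℕ => (carpetN ((3 : ℝ) ^ n) : ℝ) /
      ((3 : ℝ) ^ n) ^ (Real.log 8 / Real.log 3)) atTop (𝓝 (1 / 7)) :=
    tendsto_carpetN_div_rpow three_pow_mem_Ico fun n => by rw [h_pow, div_one]
  refine ⟨h_lim_div_sqrt, h_lim_pow, ?_⟩
  rintro ⟨L, hL⟩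
  have h_three : Tendsto (fun n : ℕ => (3 : ℝ) ^ n) atTop atTop :=
    tendsto_pow_atTop_atTop_of_one_lt (by norm_num)
  have h_ne : √(2 ^ (Real.log 8 / Real.log 3)) / 7 ≠ 1 / 7 := by
    have h_one_lt : 1 < (2 : ℝ) ^ (Real.log 8 / Real.log 3) :=
      Real.one_lt_rpow one_lt_two
        (div_pos (Real.log_pos (by norm_num)) (Real.log_pos (by norm_num)))
    refine (div_lt_div_of_pos_right ?_ (by norm_num)).ne'
    exact (Real.lt_sqrt zero_le_one).2 (by simpa using h_one_lt)
  have h_L_div_sqrt := tendsto_nhds_unique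
    (hL.comp (h_three.atTop_div_const (by positivity))) h_lim_div_sqrt
  exact h_ne (h_L_div_sqrt.symm.trans (tendsto_nhds_unique (hL.comp h_three) h_lim_pow))
end

section
/- Let P : 𝔻 → 𝔻 be a proper holomorphic map of degree D with P(0) = 0, and fix r₀ ∈ (0,1). Then there exists r₁ > 0, depending only on D and r₀, such that B(0, r₁) ⊂ P(B(0, r₀)). -/
open Metric Set Filter Topology

/-!
Let `w` be small and not a critical value of `P`, and suppose no preimage of `w` lies in
`closedBall 0 ρ`. The fibre of `w` consists of at most `D` simple zeros `aᵢ` of `P - w`, so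
`g = (P - w) / ∏ (z - aᵢ)` is holomorphic and zero-free on the disk. Properness puts a circle
`|z| = R < 1` on which `|P| > 1/2`, hence `|g| ≥ 1/(4·2^D)` there; by the minimum modulus
principle the same holds at `0`, while `|g 0| = |w| / ∏ |aᵢ| ≤ |w| / ρ^D`. This forces
`|w| ≥ ρ^D/(4·2^D)`, impossible for small `w`. The critical values of `P` in the compact set
`{|P| ≤ 1/2}` are finitely many, and the closed set `P(closedBall 0 ρ)`, containing a small ball
minus a finite set, contains the whole ball.
-/

theorem AnalyticOnNhd.finite_zeros_of_isCompact {f : ℂ → ℂ} {U K : Set ℂ}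
    (hf : AnalyticOnNhd ℂ f U) (hU : IsPreconnected U) (hf0 : ¬EqOn f 0 U)
    (hK : IsCompact K) (hKU : K ⊆ U) : {z ∈ K | f z = 0}.Finite := by
  have hcod := (hf.eqOn_zero_or_eventually_ne_zero_of_preconnected hU).resolve_left hf0
  exact (hK.finite_sdiff_of_mem_codiscreteWithin (codiscreteWithin_mono hKU hcod)).subset
    fun z hz => ⟨hz.1, not_not.2 hz.2⟩

theorem finite_image_setOf_deriv_eq_zero {P : ℂ → ℂ} {U K : Set ℂ} (hU : IsOpen U)
    (hU' : IsPreconnected U) (hP : DifferentiableOn ℂ P U) {z₁ z₂ : ℂ} (hz₁ : z₁ ∈ U)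
    (hz₂ : z₂ ∈ U) (hP₁₂ : P z₁ ≠ P z₂) (hK : IsCompact K) (hKU : K ⊆ U) :
    (P '' {z ∈ K | deriv P z = 0}).Finite :=
  ((hP.analyticOnNhd hU).deriv.finite_zeros_of_isCompact hU'
    (fun h => hP₁₂ (hU.is_const_of_deriv_eq_zero hU' hP h hz₁ hz₂)) hK hKU).image P

theorem IsOpen.subset_of_sdiff_subset_isClosed {E : Type*} [NormedAddCommGroup E]
    [NormedSpace ℝ E] [Nontrivial E] {U C F : Set E} (hU : IsOpen U) (hC : C.Countable)
    (hF : IsClosed F) (h : U \ C ⊆ F) : U ⊆ F :=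
  calc U ⊆ closure (U ∩ Cᶜ) := (hC.dense_compl ℝ).open_subset_closure_inter hU
    _ ⊆ F := closure_minimal h hF

theorem exists_eq_mul_prod_sub {f : ℂ → ℂ} {U : Set ℂ} (hU : IsOpen U)
    (hf : DifferentiableOn ℂ f U) (s : Finset ℂ) (hsU : ↑s ⊆ U) (hs : ∀ a ∈ s, f a = 0) :
    ∃ g, DifferentiableOn ℂ g U ∧ ∀ z, f z = g z * ∏ a ∈ s, (z - a) := by
  induction s using Finset.induction_on generalizing f with
  | empty => exact ⟨f, hf, by simp⟩
  | insert a s has ih =>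
    have haU : a ∈ U := hsU (Finset.mem_insert_self a s)
    have hfa : f a = 0 := hs a (Finset.mem_insert_self a s)
    obtain ⟨g, hg, hfg⟩ := ih ((Complex.differentiableOn_dslope (hU.mem_nhds haU)).2 hf)
      (fun b hb => hsU (Finset.mem_insert_of_mem hb)) fun b hb => by
        rw [dslope_of_ne f (ne_of_mem_of_not_mem hb has), slope_def_field,
          hs b (Finset.mem_insert_of_mem hb), hfa, sub_zero, zero_div]
    refine ⟨g, hg, fun z => ?_⟩
    have := sub_smul_dslope f a z
    rw [hfa, sub_zero, smul_eq_mul, hfg z] at this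
    rw [Finset.prod_insert has, ← this]
    ring

theorem ne_zero_of_eq_mul_prod_sub {f g : ℂ → ℂ} {s : Finset ℂ}
    (hfg : ∀ z, f z = g z * ∏ a ∈ s, (z - a)) {a : ℂ} (ha : a ∈ s)
    (hg : DifferentiableAt ℂ g a) (hf : deriv f a ≠ 0) : g a ≠ 0 := by
  set h : ℂ → ℂ := fun z => g z * ∏ b ∈ s.erase a, (z - b)
  have hfh : f = fun z => (z - a) * h z := funext fun z => by
    rw [hfg z, ← Finset.mul_prod_erase s _ ha]; ring
  have hh : DifferentiableAt ℂ h a := hg.mul (by fun_prop)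
  have hderiv : HasDerivAt f (h a) a := by
    simpa [← hfh] using ((hasDerivAt_id' a).sub_const a).fun_mul hh.hasDerivAt
  intro hga
  exact hf (by simp [hderiv.deriv, h, hga])

theorem Complex.le_norm_of_forall_mem_frontier_le_norm {E : Type*} [NormedAddCommGroup E]
    [NormedSpace ℂ E] [Nontrivial E] {f : E → ℂ} {U : Set E} (hU : Bornology.IsBounded U)
    (hf : DiffContOnCl ℂ f U) (hf0 : ∀ z ∈ closure U, f z ≠ 0) {m : ℝ}
    (hm : ∀ z ∈ frontier U, m ≤ ‖f z‖) {z : E} (hz : z ∈ closure U) : m ≤ ‖f z‖ := by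
  rcases le_or_gt m 0 with hm0 | hm0
  · exact hm0.trans (norm_nonneg _)
  have hinv : ‖(f z)⁻¹‖ ≤ m⁻¹ :=
    Complex.norm_le_of_forall_mem_frontier_norm_le hU (hf.inv hf0) (fun w hw => by
      rw [Pi.inv_apply, norm_inv]
      exact inv_anti₀ hm0 (hm w hw)) hz
  rw [norm_inv] at hinv
  exact (inv_le_inv₀ (norm_pos_iff.2 (hf0 z hz)) hm0).1 hinv

theorem exists_sphere_lt_norm_of_isCompact {P : ℂ → ℂ} {c : ℝ}
    (hE : IsCompact {z ∈ ball (0 : ℂ) 1 | P z ∈ closedBall 0 c}) :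
    ∃ R, 0 < R ∧ R < 1 ∧ ∀ z ∈ sphere (0 : ℂ) R, c < ‖P z‖ := by
  obtain ⟨R, ⟨hR0, hR1⟩, hER⟩ :=
    exists_pos_lt_subset_ball one_pos hE.isClosed (sep_subset _ _)
  refine ⟨R, hR0, hR1, fun z hz => not_le.1 fun h => ?_⟩
  exact sphere_disjoint_ball.ne_of_mem hz
    (hER ⟨sphere_subset_ball hR1 hz, mem_closedBall_zero_iff.2 h⟩) rfl

theorem mul_pow_card_le_norm_sub {P : ℂ → ℂ} (hP : DifferentiableOn ℂ P (ball 0 1))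
    {w : ℂ} {s : Finset ℂ} (hs : ∀ z, z ∈ s ↔ z ∈ ball (0 : ℂ) 1 ∧ P z = w)
    (hcrit : ∀ a ∈ s, deriv P a ≠ 0) {ρ : ℝ} (hρ0 : 0 ≤ ρ) (hρ : ∀ a ∈ s, ρ ≤ ‖a‖)
    {R m : ℝ} (hR0 : 0 < R) (hR1 : R < 1) (hm : ∀ z ∈ sphere (0 : ℂ) R, m ≤ ‖P z - w‖) :
    m * ρ ^ s.card ≤ 2 ^ s.card * ‖P 0 - w‖ := by
  obtain ⟨g, hg, hfg⟩ := exists_eq_mul_prod_sub isOpen_ball (hP.sub_const w) s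
    (fun a ha => ((hs a).1 ha).1) fun a ha => by simp [((hs a).1 ha).2]
  have hg0 : ∀ z ∈ ball (0 : ℂ) 1, g z ≠ 0 := by
    intro z hz hgz
    by_cases hzs : z ∈ s
    · refine ne_zero_of_eq_mul_prod_sub hfg hzs
        (hg.differentiableAt (isOpen_ball.mem_nhds hz)) ?_ hgz
      rw [deriv_sub_const]
      exact hcrit z hzs
    · exact hzs ((hs z).2 ⟨hz, sub_eq_zero.1 (by simp [hfg z, hgz])⟩)
  have hRball : closedBall (0 : ℂ) R ⊆ ball 0 1 := closedBall_subset_ball hR1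
  have hsphere : ∀ z ∈ sphere (0 : ℂ) R, m / 2 ^ s.card ≤ ‖g z‖ := by
    intro z hz
    have hprod : ‖∏ a ∈ s, (z - a)‖ ≤ 2 ^ s.card := by
      rw [norm_prod, ← Finset.prod_const]
      refine Finset.prod_le_prod (fun _ _ => norm_nonneg _) fun a ha => ?_
      have ha1 := mem_ball_zero_iff.1 ((hs a).1 ha).1
      have hz1 := mem_sphere_zero_iff_norm.1 hz
      linarith [norm_sub_le z a]
    rw [div_le_iff₀ (by positivity)]
    calc m ≤ ‖P z - w‖ := hm z hz
      _ = ‖g z‖ * ‖∏ a ∈ s, (z - a)‖ := by rw [hfg z, norm_mul]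
      _ ≤ ‖g z‖ * 2 ^ s.card := by gcongr
  have hg0_lower : m / 2 ^ s.card ≤ ‖g 0‖ := by
    refine Complex.le_norm_of_forall_mem_frontier_le_norm isBounded_ball
      (hg.diffContOnCl_ball hRball) ?_ ?_ (subset_closure (mem_ball_self hR0))
    · rw [closure_ball _ hR0.ne']
      exact fun z hz => hg0 z (hRball hz)
    · rwa [frontier_ball _ hR0.ne']
  have hprod0 : ρ ^ s.card ≤ ‖∏ a ∈ s, (0 - a)‖ := by
    rw [norm_prod, ← Finset.prod_const]
    exact Finset.prod_le_prod (fun _ _ => hρ0) fun a ha => by simpa using hρ a ha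
  calc m * ρ ^ s.card = m / 2 ^ s.card * ρ ^ s.card * 2 ^ s.card := by field_simp
    _ ≤ ‖g 0‖ * ‖∏ a ∈ s, (0 - a)‖ * 2 ^ s.card := by gcongr
    _ = 2 ^ s.card * ‖P 0 - w‖ := by rw [hfg 0, norm_mul]; ring

theorem mem_image_closedBall_of_lt {P : ℂ → ℂ} (hP : DifferentiableOn ℂ P (ball 0 1))
    {w : ℂ} {D : ℕ} (hfin : {z ∈ ball (0 : ℂ) 1 | P z = w}.Finite)
    (hcard : {z ∈ ball (0 : ℂ) 1 | P z = w}.ncard ≤ D)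
    (hcrit : ∀ z ∈ ball (0 : ℂ) 1, P z = w → deriv P z ≠ 0)
    {R m : ℝ} (hR0 : 0 < R) (hR1 : R < 1) (hm : ∀ z ∈ sphere (0 : ℂ) R, m ≤ ‖P z - w‖)
    {ρ : ℝ} (hρ0 : 0 ≤ ρ) (hρ1 : ρ ≤ 1) (hw : 2 ^ D * ‖P 0 - w‖ < m * ρ ^ D) :
    w ∈ P '' closedBall 0 ρ := by
  by_contra hw_not
  set s := hfin.toFinset
  have hs : ∀ z, z ∈ s ↔ z ∈ ball (0 : ℂ) 1 ∧ P z = w := fun z => hfin.mem_toFinset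
  have hsD : s.card ≤ D := by rwa [← ncard_eq_toFinset_card _ hfin]
  have hρ : ∀ a ∈ s, ρ ≤ ‖a‖ := fun a ha => le_of_not_ge fun hlt =>
    hw_not ⟨a, mem_closedBall_zero_iff.2 hlt, ((hs a).1 ha).2⟩
  have key := mul_pow_card_le_norm_sub hP hs
    (fun a ha => hcrit a ((hs a).1 ha).1 ((hs a).1 ha).2) hρ0 hρ hR0 hR1 hm
  have hm0 : 0 < m :=
    pos_of_mul_pos_left ((by positivity : (0 : ℝ) ≤ 2 ^ D * ‖P 0 - w‖).trans_lt hw) (by positivity)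
  have : m * ρ ^ D ≤ 2 ^ D * ‖P 0 - w‖ :=
    calc m * ρ ^ D ≤ m * ρ ^ s.card :=
          mul_le_mul_of_nonneg_left (pow_le_pow_of_le_one hρ0 hρ1 hsD) hm0.le
      _ ≤ 2 ^ s.card * ‖P 0 - w‖ := key
      _ ≤ 2 ^ D * ‖P 0 - w‖ := by gcongr; norm_num
  linarith

theorem proper_disk_image_contains_ball_general (D : ℕ)
    (r₀ : ℝ) (hr₀0 : 0 < r₀) (hr₀1 : r₀ < 1) :
    ∃ r₁ : ℝ, 0 < r₁ ∧ ∀ P : ℂ → ℂ,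
      DifferentiableOn ℂ P (ball (0 : ℂ) 1) →
      MapsTo P (ball (0 : ℂ) 1) (ball (0 : ℂ) 1) →
      (∀ K ⊆ ball (0 : ℂ) 1, IsCompact K → IsCompact {z ∈ ball (0 : ℂ) 1 | P z ∈ K}) →
      (∀ w ∈ ball (0 : ℂ) 1, {z ∈ ball (0 : ℂ) 1 | P z = w}.Finite ∧
        1 ≤ {z ∈ ball (0 : ℂ) 1 | P z = w}.ncard ∧
        {z ∈ ball (0 : ℂ) 1 | P z = w}.ncard ≤ D) →
      (∃ w ∈ ball (0 : ℂ) 1, {z ∈ ball (0 : ℂ) 1 | P z = w}.ncard = D) →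
      P 0 = 0 →
      ball (0 : ℂ) r₁ ⊆ P '' ball (0 : ℂ) r₀ := by
  have hρ0 : 0 < r₀ / 2 := by positivity
  have hr₁ : (r₀ / 2) ^ D / (4 * 2 ^ D) ≤ 1 / 4 := by
    rw [div_le_iff₀ (by positivity)]
    linarith [pow_le_one₀ (n := D) hρ0.le (by linarith : r₀ / 2 ≤ 1),
      one_le_pow₀ (n := D) (one_le_two : (1 : ℝ) ≤ 2)]
  refine ⟨(r₀ / 2) ^ D / (4 * 2 ^ D), by positivity, fun P hP _ hproper hfib _ hP0 => ?_⟩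
  set E := {z ∈ ball (0 : ℂ) 1 | P z ∈ closedBall (0 : ℂ) (1 / 2)}
  have hE : IsCompact E :=
    hproper _ (closedBall_subset_ball (by norm_num)) (isCompact_closedBall _ _)
  obtain ⟨R, hR0, hR1, hsphere⟩ := exists_sphere_lt_norm_of_isCompact hE
  obtain ⟨z, hz, hPz⟩ :=
    nonempty_of_ncard_ne_zero (Nat.one_le_iff_ne_zero.1 (hfib (1 / 2) (by norm_num)).2.1)
  have hC := finite_image_setOf_deriv_eq_zero isOpen_ball (convex_ball _ _).isPreconnected hP
    hz (mem_ball_self one_pos) (by norm_num [hPz, hP0]) hE (sep_subset _ _)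
  have hsub : ball (0 : ℂ) ((r₀ / 2) ^ D / (4 * 2 ^ D)) ⊆ P '' closedBall 0 (r₀ / 2) := by
    refine isOpen_ball.subset_of_sdiff_subset_isClosed hC.countable
      ((isCompact_closedBall _ _).image_of_continuousOn
        (hP.continuousOn.mono (closedBall_subset_ball (by linarith)))).isClosed ?_
    rintro w ⟨hw, hwC⟩
    rw [mem_ball_zero_iff] at hw
    have hw4 : ‖w‖ < 1 / 4 := hw.trans_le hr₁
    have hcrit : ∀ z ∈ ball (0 : ℂ) 1, P z = w → deriv P z ≠ 0 := fun z hz hPz hdz =>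
      hwC ⟨z, ⟨⟨hz, by rw [mem_closedBall_zero_iff, hPz]; linarith⟩, hdz⟩, hPz⟩
    have hwball : w ∈ ball (0 : ℂ) 1 := mem_ball_zero_iff.2 (by linarith)
    refine mem_image_closedBall_of_lt hP (hfib w hwball).1 (hfib w hwball).2.2 hcrit hR0 hR1
      (m := 1 / 4) (fun z hz => ?_) hρ0.le (by linarith) ?_
    · linarith [hsphere z hz, norm_sub_norm_le (P z) w]
    · rw [hP0, zero_sub, norm_neg]
      rw [lt_div_iff₀ (by positivity)] at hw
      linarith
  exact hsub.trans (image_mono (closedBall_subset_ball (by linarith)))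

/-- for a proper holomorphic map `P : 𝔻 → 𝔻` of degree `D` with `P(0) = 0`
and any `r₀ ∈ (0,1)`, there exists `r₁ > 0` depending only on `D` and `r₀` with
`B(0,r₁) ⊆ P(B(0,r₀))`. -/
theorem proper_disk_image_contains_ball (D : ℕ) (hD : 1 ≤ D)
    (r₀ : ℝ) (hr₀0 : 0 < r₀) (hr₀1 : r₀ < 1) :
    ∃ r₁ : ℝ, 0 < r₁ ∧ ∀ P : ℂ → ℂ,
      DifferentiableOn ℂ P (ball (0 : ℂ) 1) →
      MapsTo P (ball (0 : ℂ) 1) (ball (0 : ℂ) 1) →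
      (∀ K ⊆ ball (0 : ℂ) 1, IsCompact K → IsCompact {z ∈ ball (0 : ℂ) 1 | P z ∈ K}) →
      (∀ w ∈ ball (0 : ℂ) 1, {z ∈ ball (0 : ℂ) 1 | P z = w}.Finite ∧
        1 ≤ {z ∈ ball (0 : ℂ) 1 | P z = w}.ncard ∧
        {z ∈ ball (0 : ℂ) 1 | P z = w}.ncard ≤ D) →
      (∃ w ∈ ball (0 : ℂ) 1, {z ∈ ball (0 : ℂ) 1 | P z = w}.ncard = D) →
      P 0 = 0 →
      ball (0 : ℂ) r₁ ⊆ P '' ball (0 : ℂ) r₀ :=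
  proper_disk_image_contains_ball_general D r₀ hr₀0 hr₀1
end

section
/- Let P : 𝔻 → 𝔻 be a proper holomorphic map of degree D with P(0) = 0, and fix ρ ∈ (0,1). Then there exists a constant C > 0 depending only on D and ρ such that for every connected set A ⊂ B(0,ρ), diam A ≤ C·(diam P(A))^{1/D}. -/
/-!
Fix `z₀ ∈ A`. On the unit disc, `P - P z₀ = ∏ b ∈ T, (z - b) ^ m b * H` with `T` its zero set and
`H` zero-free. A value close to `P z₀` has at least `m b` preimages near each `b` (take an
`m b`-th root of the cofactor and apply the open mapping theorem), so `∑ m b ≤ D`. As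
`‖P z₀‖ < ρ` by Schwarz, properness keeps `‖P - P z₀‖ ≥ (1 - ρ) / 2` on a circle `‖z‖ = r < 1`
enclosing `B(0, ρ)`, where `‖z - b‖ ≤ 2`; the minimum modulus principle for `H` then gives
`‖P z - P z₀‖ ≥ (1 - ρ) / 2 * ∏ (‖z - b‖ / 2) ^ m b` on `B(0, ρ)`. Finally, as `A` is connected
it has `D + 1` points on spheres around `z₀` that are `≍ diam A / D` apart, one of which is that
far from all of the at most `D` points of `T`; hence `diam P(A) ≳ (diam A) ^ D`.
-/

open Metric Set Filter Topology

namespace Complex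

open Polynomial

theorem card_nthRootsFinset {m : ℕ} (hm : m ≠ 0) {a : ℂ} (ha : a ≠ 0) :
    (nthRootsFinset m a).card = m := by
  classical
  have hζ := isPrimitiveRoot_exp m hm
  rw [nthRootsFinset_def, Multiset.toFinset_card_of_nodup (hζ.nthRoots_nodup ha),
    hζ.card_nthRoots, if_pos (IsAlgClosed.exists_pow_nat_eq a (Nat.pos_of_ne_zero hm))]

theorem eventually_nthRootsFinset_subset {m : ℕ} (hm : m ≠ 0) {W : Set ℂ} (hW : W ∈ 𝓝 0) :
    ∀ᶠ w in 𝓝 (0 : ℂ), ↑(nthRootsFinset m w) ⊆ W := by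
  obtain ⟨ε, hε, hεW⟩ := Metric.mem_nhds_iff.1 hW
  have hsmall : ∀ᶠ w in 𝓝 (0 : ℂ), ‖w‖ < ε ^ m :=
    eventually_norm_sub_lt 0 (pow_pos hε m) |>.mono fun w hw => by simpa using hw
  filter_upwards [hsmall] with w hw η hη
  rw [Finset.mem_coe, mem_nthRootsFinset (Nat.pos_of_ne_zero hm)] at hη
  refine hεW (mem_ball_zero_iff.2 ?_)
  rw [← pow_lt_pow_iff_left₀ (norm_nonneg η) hε.le hm, ← norm_pow, hη]
  exact hw

theorem exists_eventually_pow_eq {u : ℂ → ℂ} {b : ℂ} (hu : ∀ᶠ z in 𝓝 b, DifferentiableAt ℂ u z)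
    (hub : u b ≠ 0) {m : ℕ} (hm : m ≠ 0) :
    ∃ v : ℂ → ℂ, ∀ᶠ z in 𝓝 b, DifferentiableAt ℂ v z ∧ v z ^ m = u z := by
  refine ⟨fun z => u b ^ (m⁻¹ : ℂ) * (u z / u b) ^ (m⁻¹ : ℂ), ?_⟩
  have hslit : ∀ᶠ z in 𝓝 b, u z / u b ∈ slitPlane := by
    refine ((hu.self_of_nhds.continuousAt.div_const (u b)).eventually_mem ?_)
    rw [div_self hub]
    exact isOpen_slitPlane.mem_nhds one_mem_slitPlane
  filter_upwards [hu, hslit] with z hz hzs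
  refine ⟨(differentiableAt_const _).mul ((hz.div_const _).cpow_const hzs), ?_⟩
  rw [mul_pow, cpow_nat_inv_pow _ hm, cpow_nat_inv_pow _ hm, mul_div_cancel₀ _ hub]

theorem eventually_le_encard_sub_pow_mul {u : ℂ → ℂ} {b : ℂ}
    (hu : ∀ᶠ z in 𝓝 b, DifferentiableAt ℂ u z) (hub : u b ≠ 0) (m : ℕ) {V : Set ℂ}
    (hV : V ∈ 𝓝 b) :
    ∀ᶠ w in 𝓝[≠] 0, (m : ℕ∞) ≤ {z ∈ V | (z - b) ^ m * u z = w}.encard := by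
  rcases eq_or_ne m 0 with rfl | hm
  · simp
  obtain ⟨v, hv⟩ := exists_eventually_pow_eq hu hub hm
  set ψ : ℂ → ℂ := fun z => (z - b) * v z
  have hψ : AnalyticAt ℂ ψ b := analyticAt_iff_eventually_differentiableAt.2 <|
    hv.mono fun z hz => (differentiableAt_id.sub_const b).mul hz.1
  have hψ_ne : ∀ᶠ z in 𝓝[≠] b, ψ z ≠ 0 := by
    filter_upwards [nhdsWithin_le_nhds (hv.and (hu.self_of_nhds.continuousAt.eventually_ne hub)),
      self_mem_nhdsWithin] with z ⟨⟨_, hvu⟩, huz⟩ hzb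
    exact mul_ne_zero (sub_ne_zero.2 hzb) fun h => huz (by rw [← hvu, h, zero_pow hm])
  -- open mapping: `ψ` is a local coordinate at `b` in which the map reads `ψ ^ m`
  have hopen : 𝓝 0 ≤ map ψ (𝓝 b) := by
    refine (hψ.eventually_constant_or_nhds_le_map_nhds.resolve_left fun hconst => ?_).trans_eq'
      (by simp [ψ])
    obtain ⟨z, hz, hz'⟩ := (hψ_ne.and (nhdsWithin_le_nhds hconst)).exists
    exact hz (hz'.trans (by simp [ψ]))
  have hV' : ψ '' (V ∩ {z | v z ^ m = u z}) ∈ 𝓝 0 :=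
    hopen (image_mem_map (inter_mem hV (hv.mono fun z hz => hz.2)))
  filter_upwards [nhdsWithin_le_nhds (eventually_nthRootsFinset_subset hm hV'),
    self_mem_nhdsWithin] with w hw hw0
  calc (m : ℕ∞) = (↑(nthRootsFinset m w) : Set ℂ).encard := by
        rw [encard_coe_eq_coe_finsetCard, card_nthRootsFinset hm hw0]
    _ ≤ (ψ '' {z ∈ V ∩ {z | v z ^ m = u z} | ψ z ^ m = w}).encard := by
        refine encard_le_encard fun η hη => ?_
        obtain ⟨z, hz, rfl⟩ := hw hη
        exact ⟨z, ⟨hz, (mem_nthRootsFinset (Nat.pos_of_ne_zero hm) _).1 hη⟩, rfl⟩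
    _ ≤ {z ∈ V ∩ {z | v z ^ m = u z} | ψ z ^ m = w}.encard := encard_image_le _ _
    _ ≤ {z ∈ V | (z - b) ^ m * u z = w}.encard := by
        refine encard_le_encard fun z ⟨⟨hzV, hzv⟩, hz⟩ => ⟨hzV, ?_⟩
        rw [← hzv, ← mul_pow]
        exact hz

theorem exists_eq_sub_pow_mul {U : Set ℂ} {F : ℂ → ℂ} {b : ℂ} (hF : DifferentiableOn ℂ F U)
    (hU : U ∈ 𝓝 b) (hzero : {z ∈ U | F z = 0}.Finite) :
    ∃ (n : ℕ) (G : ℂ → ℂ), DifferentiableOn ℂ G U ∧ G b ≠ 0 ∧ ∀ z, F z = (z - b) ^ n * G z := by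
  obtain ⟨p, hp⟩ := hF.analyticAt hU
  have hp0 : p ≠ 0 := fun hp0 =>
    hzero.not_infinite <| infinite_of_mem_nhds b (inter_mem hU (hp.locally_zero_iff.2 hp0))
  refine ⟨p.order, _, ?_, hp.iterate_dslope_fslope_ne_zero hp0, hp.eq_pow_order_mul_iterate_dslope⟩
  induction p.order with
  | zero => exact hF
  | succ n ih =>
    rw [Function.iterate_succ_apply']
    exact (differentiableOn_dslope hU).2 ih

theorem exists_eq_prod_sub_pow_mul {U : Set ℂ} (hU : IsOpen U) (T : Finset ℂ) {F : ℂ → ℂ}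
    (hF : DifferentiableOn ℂ F U) (hTU : ↑T ⊆ U) (hzero : {z ∈ U | F z = 0} ⊆ T) :
    ∃ (m : ℂ → ℕ) (H : ℂ → ℂ), DifferentiableOn ℂ H U ∧ (∀ z ∈ U, H z ≠ 0) ∧
      ∀ z, F z = (∏ b ∈ T, (z - b) ^ m b) * H z := by
  classical
  induction T using Finset.induction_on generalizing F with
  | empty => exact ⟨0, F, hF, fun z hz hFz => by simpa using hzero ⟨hz, hFz⟩, by simp⟩
  | @insert b T hbT ih =>
    have hbU : b ∈ U := hTU (Finset.mem_insert_self b T)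
    obtain ⟨n, G, hG, hGb, hFG⟩ :=
      exists_eq_sub_pow_mul hF (hU.mem_nhds hbU) ((Finset.finite_toSet _).subset hzero)
    have hGzero : {z ∈ U | G z = 0} ⊆ T := by
      rintro z ⟨hzU, hGz⟩
      have hzb : z ≠ b := by rintro rfl; exact hGb hGz
      simpa [hzb] using hzero ⟨hzU, by rw [hFG, hGz, mul_zero]⟩
    obtain ⟨m, H, hH, hH0, hGH⟩ :=
      ih hG (fun z hz => hTU (Finset.mem_insert_of_mem hz)) hGzero
    refine ⟨Function.update m b n, H, hH, hH0, fun z => ?_⟩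
    have hprod : ∏ c ∈ T, (z - c) ^ Function.update m b n c = ∏ c ∈ T, (z - c) ^ m c :=
      Finset.prod_congr rfl fun c hc => by rw [Function.update_of_ne (ne_of_mem_of_not_mem hc hbT)]
    rw [Finset.prod_insert hbT, Function.update_self, hprod, hFG, hGH]
    ring

theorem eventually_sum_le_encard {U : Set ℂ} (hU : IsOpen U) {F H : ℂ → ℂ} {T : Finset ℂ}
    {m : ℂ → ℕ} (hTU : ↑T ⊆ U) (hH : DifferentiableOn ℂ H U) (hH0 : ∀ z ∈ U, H z ≠ 0)
    (hF : ∀ z, F z = (∏ b ∈ T, (z - b) ^ m b) * H z) :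
    ∀ᶠ w in 𝓝[≠] 0, ((∑ b ∈ T, m b : ℕ) : ℕ∞) ≤ {z ∈ U | F z = w}.encard := by
  classical
  obtain ⟨W, hW, hWdisj⟩ := T.finite_toSet.t2_separation
  set u : ℂ → ℂ → ℂ := fun b z => (∏ c ∈ T.erase b, (z - c) ^ m c) * H z
  have hFu : ∀ b ∈ T, ∀ z, F z = (z - b) ^ m b * u b z := fun b hb z => by
    rw [hF, ← Finset.mul_prod_erase T _ hb, mul_assoc]
  have hlocal : ∀ b ∈ T, ∀ᶠ w in 𝓝[≠] 0,
      (m b : ℕ∞) ≤ {z ∈ W b ∩ U | (z - b) ^ m b * u b z = w}.encard := by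
    intro b hb
    have hbU : U ∈ 𝓝 b := hU.mem_nhds (hTU hb)
    have hu : ∀ᶠ z in 𝓝 b, DifferentiableAt ℂ (u b) z := by
      filter_upwards [hbU] with z hz
      exact ((Differentiable.fun_finsetProd fun c _ => (differentiable_id.sub_const c).pow _) z).mul
        (hH.differentiableAt (hU.mem_nhds hz))
    have hub : u b b ≠ 0 := mul_ne_zero (Finset.prod_ne_zero_iff.2 fun c hc =>
      pow_ne_zero _ (sub_ne_zero.2 (Finset.ne_of_mem_erase hc).symm)) (hH0 b (hTU hb))
    exact eventually_le_encard_sub_pow_mul hu hub (m b)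
      (inter_mem ((hW b).2.mem_nhds (hW b).1) hbU)
  filter_upwards [(eventually_all_finset T).2 hlocal] with w hw
  calc ((∑ b ∈ T, m b : ℕ) : ℕ∞)
        ≤ ∑ b ∈ T, {z ∈ W b ∩ U | (z - b) ^ m b * u b z = w}.encard := by
        push_cast
        exact Finset.sum_le_sum hw
    _ = (⋃ b ∈ T, {z ∈ W b ∩ U | (z - b) ^ m b * u b z = w}).encard := by
        rw [← Finset.set_biUnion_coe,
          T.finite_toSet.encard_biUnion (hWdisj.mono fun b z hz => hz.1.1), finsum_mem_coe_finset]
    _ ≤ {z ∈ U | F z = w}.encard := by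
        refine encard_le_encard (iUnion₂_subset fun b hb z hz => ⟨hz.1.2, ?_⟩)
        rw [hFu b hb]
        exact hz.2

theorem le_norm_of_forall_mem_frontier_le_norm_s18 {E : Type*} [NormedAddCommGroup E]
    [NormedSpace ℂ E] [Nontrivial E] {g : E → ℂ} {U : Set E} (hU : Bornology.IsBounded U)
    (hg : DiffContOnCl ℂ g U) (hg0 : ∀ z ∈ closure U, g z ≠ 0) {c : ℝ}
    (hc : ∀ z ∈ frontier U, c ≤ ‖g z‖) {z : E} (hz : z ∈ closure U) : c ≤ ‖g z‖ := by
  rcases le_or_gt c 0 with hc0 | hc0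
  · exact hc0.trans (norm_nonneg _)
  have hinv : ‖(g z)⁻¹‖ ≤ c⁻¹ :=
    norm_le_of_forall_mem_frontier_norm_le hU (hg.inv hg0)
      (fun w hw => by rw [Pi.inv_apply, norm_inv]; exact inv_anti₀ hc0 (hc w hw)) hz
  rw [norm_inv] at hinv
  exact (inv_le_inv₀ (norm_pos_iff.2 (hg0 z hz)) hc0).1 hinv

end Complex

theorem mul_prod_norm_sub_div_two_pow_le_norm {F H : ℂ → ℂ} {T : Finset ℂ} {m : ℂ → ℕ}
    {r c : ℝ} (hr0 : 0 < r) (hr1 : r ≤ 1) (hT : ∀ b ∈ T, ‖b‖ ≤ 1)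
    (hH : DifferentiableOn ℂ H (closedBall 0 r)) (hH0 : ∀ z ∈ closedBall (0 : ℂ) r, H z ≠ 0)
    (hF : ∀ z, F z = (∏ b ∈ T, (z - b) ^ m b) * H z) (hc : ∀ ζ ∈ sphere (0 : ℂ) r, c ≤ ‖F ζ‖)
    {z : ℂ} (hz : z ∈ closedBall (0 : ℂ) r) :
    c * ∏ b ∈ T, (‖z - b‖ / 2) ^ m b ≤ ‖F z‖ := by
  have hprod : ∀ z ∈ closedBall (0 : ℂ) r,
      0 ≤ ∏ b ∈ T, (‖z - b‖ / 2) ^ m b ∧ ∏ b ∈ T, (‖z - b‖ / 2) ^ m b ≤ 1 := fun z hz =>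
    ⟨by positivity, Finset.prod_le_one (fun b _ => by positivity) fun b hb => pow_le_one₀
      (by positivity) (by linarith [norm_sub_le z b, mem_closedBall_zero_iff.1 hz, hT b hb])⟩
  have hnorm : ∀ z, ‖F z‖ = (∏ b ∈ T, (‖z - b‖ / 2) ^ m b) * ‖(2 : ℂ) ^ (∑ b ∈ T, m b) * H z‖ := by
    intro z
    rw [hF, norm_mul, norm_mul, norm_prod, norm_pow, ← Finset.prod_pow_eq_pow_sum, ← mul_assoc,
      ← Finset.prod_mul_distrib]
    simp [div_pow]
  -- On the sphere the product is `≤ 1`, so the bound passes to the zero-free factor `2 ^ ∑ m b * H`,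
  -- and from there into the disc by the minimum modulus principle.
  have hmin : c ≤ ‖(2 : ℂ) ^ (∑ b ∈ T, m b) * H z‖ := by
    rw [← closure_ball 0 hr0.ne'] at hz
    refine Complex.le_norm_of_forall_mem_frontier_le_norm_s18 isBounded_ball
      ((hH.const_mul _).diffContOnCl_ball subset_rfl) ?_ (fun ζ hζ => ?_) hz
    · rw [closure_ball 0 hr0.ne']
      exact fun z hz => mul_ne_zero (by simp) (hH0 z hz)
    · rw [frontier_ball 0 hr0.ne'] at hζ
      have := hprod ζ (sphere_subset_closedBall hζ)
      calc c ≤ ‖F ζ‖ := hc ζ hζ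
        _ ≤ ‖(2 : ℂ) ^ (∑ b ∈ T, m b) * H ζ‖ := by
          rw [hnorm]; exact mul_le_of_le_one_left (norm_nonneg _) this.2
  rw [hnorm, mul_comm c]
  exact mul_le_mul_of_nonneg_left hmin (hprod z hz).1

theorem IsPreconnected.exists_mem_forall_le_dist {X : Type*} [PseudoMetricSpace X] {A : Set X}
    (hA : IsPreconnected A) {x y : X} (hx : x ∈ A) (hy : y ∈ A) (T : Finset X) :
    ∃ z ∈ A, ∀ b ∈ T, dist x y / (2 * (T.card + 1)) ≤ dist z b := by
  set n := T.card
  set γ := dist x y / (n + 1)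
  have hγ : 0 ≤ γ := by positivity
  -- Pigeonhole: `A` has points `z j` (`j ≤ n`) on the spheres of radii `j * γ` around `x`; they
  -- are `γ`-separated, so the `γ / 2`-ball about a point of `T` contains at most one of them.
  have hsphere : ∀ j : ℕ, j ≤ n → ∃ z ∈ A, dist z x = j * γ := by
    intro j hj
    have hjγ : j * γ ≤ dist y x := by
      calc j * γ ≤ (n + 1) * γ := by gcongr; exact_mod_cast hj.trans n.le_succ
        _ = dist y x := by rw [dist_comm]; exact mul_div_cancel₀ _ (by positivity)
    have := hA.intermediate_value hx hy (continuous_id.dist continuous_const).continuousOn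
      (f := fun z => dist z x)
    simp only [dist_self] at this
    simpa using this ⟨by positivity, hjγ⟩
  have : Nonempty X := ⟨x⟩
  choose! z hzA hzx using hsphere
  have hsep : ∀ j ≤ n, ∀ k ≤ n, j < k → γ ≤ dist (z j) (z k) := by
    intro j hj k hk hjk
    have hjk' : (j : ℝ) + 1 ≤ k := by exact_mod_cast hjk
    nlinarith [dist_triangle (z k) (z j) x, dist_comm (z j) (z k), hzx j hj, hzx k hk]
  by_contra! hclose
  choose! near hnearT hnear using hclose
  obtain ⟨j, hj, k, hk, hjk, hbjk⟩ := Finset.exists_ne_map_eq_of_card_lt_of_maps_to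
    (s := Finset.range (n + 1)) (by simp [n]) (f := fun j => near (z j))
    fun j hj => hnearT _ (hzA j (Nat.lt_succ_iff.1 (Finset.mem_range.1 hj)))
  rw [Finset.mem_range, Nat.lt_succ_iff] at hj hk
  have hclose' : dist (z j) (z k) < γ := by
    have h1 := hnear _ (hzA j hj)
    have h2 := hnear _ (hzA k hk)
    rw [hbjk] at h1
    calc dist (z j) (z k) ≤ dist (z j) (near (z k)) + dist (z k) (near (z k)) :=
          dist_triangle_right _ _ _
      _ < γ := by
          have : dist x y / (2 * (n + 1)) = γ / 2 := by simp only [γ]; field_simp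
          linarith
  rcases hjk.lt_or_gt with h | h
  · exact (hsep j hj k hk h).not_gt hclose'
  · exact (hsep k hk j hj h).not_gt (dist_comm (z j) (z k) ▸ hclose')

theorem le_mul_rpow_inv_of_pow_le {a b c : ℝ} {n : ℕ} (ha : 0 ≤ a) (hb : 0 ≤ b) (hc : 0 ≤ c)
    (hn : n ≠ 0) (h : a ^ n ≤ b ^ n * c) : a ≤ b * c ^ (n : ℝ)⁻¹ := by
  calc a = (a ^ n) ^ (n : ℝ)⁻¹ := (Real.pow_rpow_inv_natCast ha hn).symm
    _ ≤ (b ^ n * c) ^ (n : ℝ)⁻¹ := by gcongr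
    _ = b * c ^ (n : ℝ)⁻¹ := by
      rw [Real.mul_rpow (by positivity) hc, Real.pow_rpow_inv_natCast hb hn]

structure IsProperDiskMap (P : ℂ → ℂ) (D : ℕ) : Prop where
  differentiableOn : DifferentiableOn ℂ P (ball 0 1)
  mapsTo : MapsTo P (ball 0 1) (ball 0 1)
  isCompact_preimage :
    ∀ K ⊆ ball (0 : ℂ) 1, IsCompact K → IsCompact {z ∈ ball (0 : ℂ) 1 | P z ∈ K}
  finite_fiber : ∀ w ∈ ball (0 : ℂ) 1, {z ∈ ball (0 : ℂ) 1 | P z = w}.Finite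
  ncard_fiber_le : ∀ w ∈ ball (0 : ℂ) 1, {z ∈ ball (0 : ℂ) 1 | P z = w}.ncard ≤ D

namespace IsProperDiskMap

variable {P : ℂ → ℂ} {D : ℕ}

theorem exists_lt_one_forall_lt_norm (hP : IsProperDiskMap P D) {s : ℝ} (hs : s < 1) :
    ∃ t < 1, ∀ z ∈ ball (0 : ℂ) 1, t ≤ ‖z‖ → s < ‖P z‖ := by
  obtain ⟨t, ht1, ht⟩ := exists_lt_subset_ball (hP.isCompact_preimage _
    (closedBall_subset_ball hs) (isCompact_closedBall 0 s)).isClosed fun z hz => hz.1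
  refine ⟨t, ht1, fun z hz htz => ?_⟩
  by_contra! h
  exact htz.not_gt (mem_ball_zero_iff.1 (ht ⟨hz, mem_closedBall_zero_iff.2 h⟩))

theorem sum_le_of_sub_eq_prod_mul (hP : IsProperDiskMap P D) {w₀ : ℂ}
    (hw₀ : w₀ ∈ ball (0 : ℂ) 1) {H : ℂ → ℂ} {T : Finset ℂ} {m : ℂ → ℕ}
    (hT : ↑T ⊆ ball (0 : ℂ) 1) (hH : DifferentiableOn ℂ H (ball 0 1))
    (hH0 : ∀ z ∈ ball (0 : ℂ) 1, H z ≠ 0) (hPH : ∀ z, P z - w₀ = (∏ b ∈ T, (z - b) ^ m b) * H z) :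
    ∑ b ∈ T, m b ≤ D := by
  have hnear : ∀ᶠ w in 𝓝[≠] 0, w₀ + w ∈ ball (0 : ℂ) 1 :=
    nhdsWithin_le_nhds ((continuous_const.add continuous_id).tendsto' 0 w₀ (add_zero _)
      |>.eventually (isOpen_ball.mem_nhds hw₀))
  obtain ⟨w, hmult, hw⟩ :=
    ((Complex.eventually_sum_le_encard isOpen_ball hT hH hH0 hPH).and hnear).exists
  have hfiber : {z ∈ ball (0 : ℂ) 1 | P z - w₀ = w} = {z ∈ ball (0 : ℂ) 1 | P z = w₀ + w} := by
    simp only [sub_eq_iff_eq_add']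
  rw [hfiber, ← (hP.finite_fiber _ hw).cast_ncard_eq] at hmult
  exact (Nat.cast_le.1 hmult).trans (hP.ncard_fiber_le _ hw)

theorem exists_finset_forall_mul_pow_le_norm_sub (hP : IsProperDiskMap P D) (hP0 : P 0 = 0)
    {ρ : ℝ} (hρ1 : ρ < 1) {z₀ : ℂ} (hz₀ : z₀ ∈ ball (0 : ℂ) ρ) :
    ∃ T : Finset ℂ, T.card ≤ D ∧ ∀ z ∈ ball (0 : ℂ) ρ, ∀ s : ℝ, 0 ≤ s →
      (∀ b ∈ T, s ≤ dist z b) → (1 - ρ) / 2 * (s / 2) ^ D ≤ ‖P z - P z₀‖ := by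
  have hρ : ball (0 : ℂ) ρ ⊆ ball 0 1 := ball_subset_ball hρ1.le
  have hw₀ : ‖P z₀‖ < ρ := (Complex.norm_le_norm_of_mapsTo_ball hP.differentiableOn
    (hP.mapsTo.mono_right ball_subset_closedBall) hP0 (mem_ball_zero_iff.1 (hρ hz₀))).trans_lt
    (mem_ball_zero_iff.1 hz₀)
  have hfin := hP.finite_fiber _ (hP.mapsTo (hρ hz₀))
  set T := hfin.toFinset
  have hT : ↑T ⊆ ball (0 : ℂ) 1 := fun z hz => (hfin.mem_toFinset.1 hz).1
  obtain ⟨m, H, hH, hH0, hPH⟩ := Complex.exists_eq_prod_sub_pow_mul isOpen_ball T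
    (hP.differentiableOn.sub_const (P z₀)) hT
    (fun z hz => hfin.mem_toFinset.2 ⟨hz.1, sub_eq_zero.1 hz.2⟩)
  have hM := hP.sum_le_of_sub_eq_prod_mul (hP.mapsTo (hρ hz₀)) hT hH hH0 hPH
  obtain ⟨t, ht1, ht⟩ := hP.exists_lt_one_forall_lt_norm (s := (1 + ρ) / 2) (by linarith)
  set r := max ρ t
  have hr1 : r < 1 := max_lt hρ1 ht1
  have hsphere : ∀ ζ ∈ sphere (0 : ℂ) r, (1 - ρ) / 2 ≤ ‖P ζ - P z₀‖ := fun ζ hζ => by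
    have hPζ := ht ζ (sphere_subset_closedBall.trans (closedBall_subset_ball hr1) hζ)
      (by rw [mem_sphere_zero_iff_norm.1 hζ]; exact le_max_right ρ t)
    linarith [norm_sub_norm_le (P ζ) (P z₀)]
  refine ⟨T, ncard_eq_toFinset_card _ hfin ▸ hP.ncard_fiber_le _ (hP.mapsTo (hρ hz₀)),
    fun z hz s hs hsT => ?_⟩
  have hs2 : s / 2 ≤ 1 := by
    linarith [hsT z₀ (hfin.mem_toFinset.2 ⟨hρ hz₀, rfl⟩), dist_le_norm_add_norm z z₀,
      mem_ball_zero_iff.1 (hρ hz), mem_ball_zero_iff.1 (hρ hz₀)]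
  calc (1 - ρ) / 2 * (s / 2) ^ D ≤ (1 - ρ) / 2 * (s / 2) ^ (∑ b ∈ T, m b) := by
        gcongr (1 - ρ) / 2 * ?_
        exact pow_le_pow_of_le_one (by positivity) hs2 hM
    _ = (1 - ρ) / 2 * ∏ b ∈ T, (s / 2) ^ m b := by rw [Finset.prod_pow_eq_pow_sum]
    _ ≤ (1 - ρ) / 2 * ∏ b ∈ T, (‖z - b‖ / 2) ^ m b := by
        gcongr with b hb
        rw [← dist_eq_norm]
        exact hsT b hb
    _ ≤ ‖P z - P z₀‖ := mul_prod_norm_sub_div_two_pow_le_norm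
        (lt_max_of_lt_left ((norm_nonneg z₀).trans_lt (mem_ball_zero_iff.1 hz₀))) hr1.le
        (fun b hb => (mem_ball_zero_iff.1 (hT hb)).le) (hH.mono (closedBall_subset_ball hr1))
        (fun z hz => hH0 z (closedBall_subset_ball hr1 hz)) hPH hsphere
        (mem_closedBall_zero_iff.2 ((mem_ball_zero_iff.1 hz).le.trans (le_max_left ρ t)))

theorem mul_dist_div_pow_le_diam_image (hP : IsProperDiskMap P D) (hP0 : P 0 = 0) {ρ : ℝ}
    (hρ1 : ρ < 1) {A : Set ℂ} (hA : A ⊆ ball (0 : ℂ) ρ) (hAc : IsPreconnected A) {x y : ℂ}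
    (hx : x ∈ A) (hy : y ∈ A) :
    (1 - ρ) / 2 * (dist x y / (4 * (D + 1))) ^ D ≤ diam (P '' A) := by
  obtain ⟨T, hTD, hT⟩ := hP.exists_finset_forall_mul_pow_le_norm_sub hP0 hρ1 (hA hx)
  obtain ⟨z, hzA, hz⟩ := hAc.exists_mem_forall_le_dist hx hy T
  have hPA : Bornology.IsBounded (P '' A) := isBounded_ball.subset
    (image_subset_iff.2 fun z hz => hP.mapsTo (ball_subset_ball hρ1.le (hA hz)))
  calc (1 - ρ) / 2 * (dist x y / (4 * (D + 1))) ^ D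
      ≤ (1 - ρ) / 2 * (dist x y / (2 * (T.card + 1)) / 2) ^ D := by
        gcongr (1 - ρ) / 2 * ?_ ^ D
        rw [div_div]
        exact div_le_div_of_nonneg_left dist_nonneg (by positivity)
          (by linarith [(Nat.cast_le (α := ℝ)).2 hTD])
    _ ≤ ‖P z - P x‖ := hT z (hA hzA) _ (by positivity) hz
    _ ≤ diam (P '' A) := by
        rw [← dist_eq_norm]
        exact dist_le_diam_of_mem hPA (mem_image_of_mem P hzA) (mem_image_of_mem P hx)

end IsProperDiskMap

theorem proper_disk_diam_holder_general (D : ℕ)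
    (ρ : ℝ) (hρ1 : ρ < 1) :
    ∃ C : ℝ, 0 < C ∧ ∀ P : ℂ → ℂ,
      DifferentiableOn ℂ P (ball (0 : ℂ) 1) →
      MapsTo P (ball (0 : ℂ) 1) (ball (0 : ℂ) 1) →
      (∀ K ⊆ ball (0 : ℂ) 1, IsCompact K → IsCompact {z ∈ ball (0 : ℂ) 1 | P z ∈ K}) →
      (∀ w ∈ ball (0 : ℂ) 1, {z ∈ ball (0 : ℂ) 1 | P z = w}.Finite ∧
        1 ≤ {z ∈ ball (0 : ℂ) 1 | P z = w}.ncard ∧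
        {z ∈ ball (0 : ℂ) 1 | P z = w}.ncard ≤ D) →
      (∃ w ∈ ball (0 : ℂ) 1, {z ∈ ball (0 : ℂ) 1 | P z = w}.ncard = D) →
      P 0 = 0 →
      ∀ A : Set ℂ, A ⊆ ball (0 : ℂ) ρ → IsConnected A →
        diam A ≤ C * (diam (P '' A)) ^ ((D : ℝ)⁻¹) := by
  have hκ : 0 < 2 / (1 - ρ) := div_pos two_pos (sub_pos.2 hρ1)
  refine ⟨4 * (D + 1) * (2 / (1 - ρ)) ^ (D : ℝ)⁻¹, by positivity, ?_⟩
  intro P hdiff hmaps hproper hfib _ hP0 A hA hAc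
  have hP : IsProperDiskMap P D := ⟨hdiff, hmaps, hproper, fun w hw => (hfib w hw).1,
    fun w hw => (hfib w hw).2.2⟩
  have hD : D ≠ 0 := by
    have := hfib 0 (mem_ball_self one_pos)
    omega
  refine diam_le_of_forall_dist_le (by positivity) fun x hx y hy => ?_
  have hxy := hP.mul_dist_div_pow_le_diam_image hP0 hρ1 hA hAc.isPreconnected hx hy
  rw [mul_assoc, ← Real.mul_rpow hκ.le diam_nonneg]
  refine le_mul_rpow_inv_of_pow_le dist_nonneg (by positivity) (by positivity) hD ?_
  calc dist x y ^ D
      = (4 * (D + 1)) ^ D * (2 / (1 - ρ)) * ((1 - ρ) / 2 * (dist x y / (4 * (D + 1))) ^ D) := by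
        rw [div_pow]
        field_simp [(sub_pos.2 hρ1).ne']
    _ ≤ (4 * (D + 1)) ^ D * (2 / (1 - ρ)) * diam (P '' A) := by gcongr
    _ = (4 * (D + 1)) ^ D * (2 / (1 - ρ) * diam (P '' A)) := mul_assoc _ _ _

/-- for a proper holomorphic map `P : 𝔻 → 𝔻` of degree `D` with `P(0) = 0`
and any `ρ ∈ (0,1)`, there is `C > 0` depending only on `D` and `ρ` such that every
connected set `A ⊆ B(0,ρ)` satisfies `diam A ≤ C·(diam P(A))^(1/D)`. -/
theorem proper_disk_diam_holder (D : ℕ) (hD : 1 ≤ D)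
    (ρ : ℝ) (hρ0 : 0 < ρ) (hρ1 : ρ < 1) :
    ∃ C : ℝ, 0 < C ∧ ∀ P : ℂ → ℂ,
      DifferentiableOn ℂ P (ball (0 : ℂ) 1) →
      MapsTo P (ball (0 : ℂ) 1) (ball (0 : ℂ) 1) →
      (∀ K ⊆ ball (0 : ℂ) 1, IsCompact K → IsCompact {z ∈ ball (0 : ℂ) 1 | P z ∈ K}) →
      (∀ w ∈ ball (0 : ℂ) 1, {z ∈ ball (0 : ℂ) 1 | P z = w}.Finite ∧
        1 ≤ {z ∈ ball (0 : ℂ) 1 | P z = w}.ncard ∧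
        {z ∈ ball (0 : ℂ) 1 | P z = w}.ncard ≤ D) →
      (∃ w ∈ ball (0 : ℂ) 1, {z ∈ ball (0 : ℂ) 1 | P z = w}.ncard = D) →
      P 0 = 0 →
      ∀ A : Set ℂ, A ⊆ ball (0 : ℂ) ρ → IsConnected A →
        diam A ≤ C * (diam (P '' A)) ^ ((D : ℝ)⁻¹) :=
  proper_disk_diam_holder_general D ρ hρ1
end
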